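/- For any smooth map m : ℝ² → S² with finite Dirichlet energy and well-defined topological charge q(m), the exchange energy satisfies the topological lower bound ∫_{ℝ²} |∇m|² d²r ≥ 8π |q(m)|. -/

import Mathlib

open Real MeasureTheory Filter

/-- In-plane rotation by angle `θ`. -/
noncomputable def rot (θ : ℝ) (r : ℝ × ℝ) : ℝ × ℝ :=
  (Real.cos θ * r.1 - Real.sin θ * r.2, Real.sin θ * r.1 + Real.cos θ * r.2)

/-- Squared Euclidean norm on `ℝ²`. -/
def nsq (r : ℝ × ℝ) : ℝ := r.1 ^ 2 + r.2 ^ 2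

/-- In-plane component of the Belavin–Polyakov profile. -/
noncomputable def mperp (r₀ θ₀ : ℝ) (r : ℝ × ℝ) : ℝ × ℝ :=
  (-(2 * r₀) / (nsq r + r₀ ^ 2)) • rot θ₀ r

/-- Out-of-plane component of the Belavin–Polyakov profile. -/
noncomputable def mpar (r₀ : ℝ) (r : ℝ × ℝ) : ℝ :=
  (r₀ ^ 2 - nsq r) / (r₀ ^ 2 + nsq r)

/-- The Belavin–Polyakov profile as a map `ℝ² → ℝ³`. -/
noncomputable def bp (r₀ θ₀ : ℝ) (r : ℝ × ℝ) : EuclideanSpace ℝ (Fin 3) :=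
  WithLp.toLp 2 ![(mperp r₀ θ₀ r).1, (mperp r₀ θ₀ r).2, mpar r₀ r]

/-- Partial derivative of a map `ℝ² → ℝ³` in direction `v`. -/
noncomputable def pder (m : ℝ × ℝ → EuclideanSpace ℝ (Fin 3)) (v r : ℝ × ℝ) :
    EuclideanSpace ℝ (Fin 3) :=
  fderiv ℝ m r v

/-- Dirichlet (exchange) energy density `|∇m|²`. -/
noncomputable def dirichletDensity (m : ℝ × ℝ → EuclideanSpace ℝ (Fin 3)) (r : ℝ × ℝ) : ℝ :=
  ‖pder m (1, 0) r‖ ^ 2 + ‖pder m (0, 1) r‖ ^ 2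

/-- Cross product in `ℝ³`. -/
noncomputable def cross3 (u v : EuclideanSpace ℝ (Fin 3)) : EuclideanSpace ℝ (Fin 3) :=
  WithLp.toLp 2 ![u 1 * v 2 - u 2 * v 1, u 2 * v 0 - u 0 * v 2, u 0 * v 1 - u 1 * v 0]

/-- Dot product in `ℝ³`. -/
noncomputable def dot3 (u v : EuclideanSpace ℝ (Fin 3)) : ℝ :=
  u 0 * v 0 + u 1 * v 1 + u 2 * v 2

/-- Topological charge density `m · (∂ₓm × ∂_ym)`. -/
noncomputable def chargeDensity (m : ℝ × ℝ → EuclideanSpace ℝ (Fin 3)) (r : ℝ × ℝ) : ℝ :=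
  dot3 (m r) (cross3 (pder m (1, 0) r) (pder m (0, 1) r))

/-- Topological charge `q(m)`. -/
noncomputable def topCharge (m : ℝ × ℝ → EuclideanSpace ℝ (Fin 3)) : ℝ :=
  (1 / (4 * Real.pi)) * ∫ r : ℝ × ℝ, chargeDensity m r

lemma norm_sq3 (v : EuclideanSpace ℝ (Fin 3)) : ‖v‖ ^ 2 = v 0 ^ 2 + v 1 ^ 2 + v 2 ^ 2 := by
  rw [EuclideanSpace.norm_eq, Real.sq_sqrt (by positivity)]
  simp [Fin.sum_univ_three, sq_abs]

lemma cs3 (a0 a1 a2 c0 c1 c2 : ℝ) (hA : a0 ^ 2 + a1 ^ 2 + a2 ^ 2 = 1) :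
    (a0 * c0 + a1 * c1 + a2 * c2) ^ 2 ≤ c0 ^ 2 + c1 ^ 2 + c2 ^ 2 := by
  nlinarith [sq_nonneg (a0 * c1 - a1 * c0), sq_nonneg (a0 * c2 - a2 * c0),
    sq_nonneg (a1 * c2 - a2 * c1), sq_nonneg c0, sq_nonneg c1, sq_nonneg c2]

lemma lagrange3 (v0 v1 v2 w0 w1 w2 : ℝ) :
    (v1 * w2 - v2 * w1) ^ 2 + (v2 * w0 - v0 * w2) ^ 2 + (v0 * w1 - v1 * w0) ^ 2
      ≤ (v0 ^ 2 + v1 ^ 2 + v2 ^ 2) * (w0 ^ 2 + w1 ^ 2 + w2 ^ 2) := by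
  nlinarith [sq_nonneg (v0 * w0 + v1 * w1 + v2 * w2)]

lemma pointwise_bound (a v w : EuclideanSpace ℝ (Fin 3)) (ha : ‖a‖ = 1) :
    |dot3 a (cross3 v w)| ≤ (‖v‖ ^ 2 + ‖w‖ ^ 2) / 2 := by
  have hA : a 0 ^ 2 + a 1 ^ 2 + a 2 ^ 2 = 1 := by
    rw [← norm_sq3, ha]; norm_num
  have hV := norm_sq3 v
  have hW := norm_sq3 w
  have hdot : dot3 a (cross3 v w) =
      a 0 * (v 1 * w 2 - v 2 * w 1) + a 1 * (v 2 * w 0 - v 0 * w 2)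
        + a 2 * (v 0 * w 1 - v 1 * w 0) := by
    simp [dot3, cross3, Matrix.cons_val_zero, Matrix.cons_val_one, Matrix.head_cons]
  have h1 := cs3 (a 0) (a 1) (a 2) (v 1 * w 2 - v 2 * w 1) (v 2 * w 0 - v 0 * w 2)
    (v 0 * w 1 - v 1 * w 0) hA
  have h2 := lagrange3 (v 0) (v 1) (v 2) (w 0) (w 1) (w 2)
  have h3 : (v 0 ^ 2 + v 1 ^ 2 + v 2 ^ 2) * (w 0 ^ 2 + w 1 ^ 2 + w 2 ^ 2)
      ≤ ((‖v‖ ^ 2 + ‖w‖ ^ 2) / 2) ^ 2 := by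
    rw [hV, hW]
    nlinarith [sq_nonneg (v 0 ^ 2 + v 1 ^ 2 + v 2 ^ 2 - (w 0 ^ 2 + w 1 ^ 2 + w 2 ^ 2))]
  have hs : (0 : ℝ) ≤ (‖v‖ ^ 2 + ‖w‖ ^ 2) / 2 := by positivity
  have hfinal : dot3 a (cross3 v w) ^ 2 ≤ ((‖v‖ ^ 2 + ‖w‖ ^ 2) / 2) ^ 2 := by
    rw [hdot]; exact h1.trans (h2.trans h3)
  calc |dot3 a (cross3 v w)| = Real.sqrt (dot3 a (cross3 v w) ^ 2) :=
      (Real.sqrt_sq_eq_abs _).symm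
    _ ≤ Real.sqrt (((‖v‖ ^ 2 + ‖w‖ ^ 2) / 2) ^ 2) := Real.sqrt_le_sqrt hfinal
    _ = (‖v‖ ^ 2 + ‖w‖ ^ 2) / 2 := Real.sqrt_sq hs

/-- Topological lower bound (Belavin–Polyakov inequality): for any smooth map
`m : ℝ² → S²` with finite Dirichlet energy and well-defined topological charge,
the exchange energy satisfies `∫ |∇m|² ≥ 8π |q(m)|`. -/
theorem exchange_ge_topological (m : ℝ × ℝ → EuclideanSpace ℝ (Fin 3))
    (hsmooth : ContDiff ℝ (⊤ : ℕ∞) m) (hunit : ∀ r, ‖m r‖ = 1)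
    (hfin : Integrable (dirichletDensity m))
    (hq : Integrable (chargeDensity m)) :
    ∫ r : ℝ × ℝ, dirichletDensity m r ≥ 8 * Real.pi * |topCharge m| := by
  have hpi : (0 : ℝ) < Real.pi := Real.pi_pos
  have key : ∀ r, |chargeDensity m r| ≤ (1 / 2) * dirichletDensity m r := by
    intro r
    have := pointwise_bound (m r) (pder m (1, 0) r) (pder m (0, 1) r) (hunit r)
    simpa [chargeDensity, dirichletDensity, div_eq_mul_inv, mul_comm] using this
  have hI : |∫ r : ℝ × ℝ, chargeDensity m r| ≤ (1 / 2) * ∫ r : ℝ × ℝ, dirichletDensity m r := by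
    calc |∫ r : ℝ × ℝ, chargeDensity m r| ≤ ∫ r : ℝ × ℝ, |chargeDensity m r| := by
          simpa [Real.norm_eq_abs] using
            norm_integral_le_integral_norm (μ := (volume : Measure (ℝ × ℝ)))
              (chargeDensity m)
      _ ≤ ∫ r : ℝ × ℝ, (1 / 2) * dirichletDensity m r :=
          integral_mono hq.abs (hfin.const_mul _) key
      _ = (1 / 2) * ∫ r : ℝ × ℝ, dirichletDensity m r := integral_const_mul _ _
  have habs : |topCharge m| = (1 / (4 * Real.pi)) * |∫ r : ℝ × ℝ, chargeDensity m r| := by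
    rw [topCharge, abs_mul, abs_of_pos (by positivity : (0:ℝ) < 1 / (4 * Real.pi))]
  rw [ge_iff_le, habs]
  have h8 : 8 * Real.pi * ((1 / (4 * Real.pi)) * |∫ r : ℝ × ℝ, chargeDensity m r|)
      = 2 * |∫ r : ℝ × ℝ, chargeDensity m r| := by
    field_simp
    ring
  rw [h8]
  linarith [hI]
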